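/- Let L be a 7-dimensional nilpotent Lie algebra of nilpotency class two over a field, containing a central element x₇, with basis x₁, ..., x₇ and brackets [x₁,x₂] = x₄ + α₁x₇, [x₁,x₃] = x₅ + α₂x₇, [x₂,x₃] = x₆ + α₆x₇, [xᵢ,xⱼ] = αᵢⱼ x₇ for the remaining pairs (with all αᵢⱼ forced to be 0 by the class-two condition since x₄, x₅, x₆ ∈ L²). Then L is isomorphic to L_{6,26} ⊕ A(1), where L_{6,26} is the 6-dimensional Lie algebra with nonzero brackets [x₁,x₂] = x₄, [x₁,x₃] = x₅, [x₂,x₃] = x₆. -/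

import Mathlib

/-- The Lie algebra `L_{6,26} ⊕ A(1)` (free nilpotent of class 2 on 3 generators, plus a
1-dimensional abelian summand): carrier `(Fin 3 → K) × (Fin 3 → K) × K`, where the first
factor is spanned by the generators `x₁,x₂,x₃`, the second by `x₄,x₅,x₆` (the centre of
`L_{6,26}`), and the last coordinate is the abelian summand `A(1)`. -/
abbrev L626A1 (K : Type*) : Type _ := (Fin 3 → K) × (Fin 3 → K) × K

namespace L626A1

variable {K : Type*} [Field K]

def idx1 : Fin 3 → Fin 3 := ![0, 0, 1]
def idx2 : Fin 3 → Fin 3 := ![1, 2, 2]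

/-- The component form of the bracket: `[x₁,x₂]=x₄`, `[x₁,x₃]=x₅`, `[x₂,x₃]=x₆`. -/
def B (a b : Fin 3 → K) : Fin 3 → K :=
  fun i => a (idx1 i) * b (idx2 i) - a (idx2 i) * b (idx1 i)

lemma B_add_left (a a' c : Fin 3 → K) : B (K := K) (a + a') c = B a c + B a' c := by
  funext i; simp only [B, Pi.add_apply]; ring

lemma B_add_right (a c c' : Fin 3 → K) : B (K := K) a (c + c') = B a c + B a c' := by
  funext i; simp only [B, Pi.add_apply]; ring

lemma B_smul_right (t : K) (a c : Fin 3 → K) : B (K := K) a (t • c) = t • B a c := by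
  funext i; simp only [B, Pi.smul_apply, smul_eq_mul]; ring

lemma B_self (a : Fin 3 → K) : B (K := K) a a = 0 := by
  funext i; simp only [B, Pi.zero_apply]; ring

lemma B_zero_left (c : Fin 3 → K) : B (K := K) 0 c = 0 := by
  funext i; simp [B]

lemma B_zero_right (a : Fin 3 → K) : B (K := K) a 0 = 0 := by
  funext i; simp [B]

/-- The bracket on `L_{6,26} ⊕ A(1)`. -/
def brkt (x y : L626A1 K) : L626A1 K := (0, B x.1 y.1, 0)

instance : LieRing (L626A1 K) :=
  { (inferInstance : AddCommGroup (L626A1 K)) with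
    bracket := brkt
    add_lie := fun x y z => by
      show brkt (x + y) z = brkt x z + brkt y z
      simp [brkt, Prod.ext_iff, B_add_left]
    lie_add := fun x y z => by
      show brkt x (y + z) = brkt x y + brkt x z
      simp [brkt, Prod.ext_iff, B_add_right]
    lie_self := fun x => by
      show brkt x x = 0
      simp [brkt, Prod.ext_iff, B_self]
    leibniz_lie := fun x y z => by
      show brkt x (brkt y z) = brkt (brkt x y) z + brkt y (brkt x z)
      simp [brkt, Prod.ext_iff, B_zero_left, B_zero_right] }

instance : LieAlgebra K (L626A1 K) :=
  { (inferInstance : Module K (L626A1 K)) with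
    lie_smul := fun t x y => by
      show brkt x (t • y) = t • brkt x y
      simp [brkt, Prod.ext_iff, B_smul_right] }

end L626A1

/-!
The substitution `x₄' = x₄ + α₁x₇`, `x₅' = x₅ + α₂x₇`, `x₆' = x₆ + α₆x₇` turns the given
brackets into `[x₁,x₂] = x₄'`, `[x₁,x₃] = x₅'`, `[x₂,x₃] = x₆'`, all other brackets of
`x₁, x₂, x₃, x₄', x₅', x₆', x₇` vanishing, which is the multiplication table of
`L_{6,26} ⊕ A(1)`. Since the bracket is bilinear, a linear isomorphism is a Lie isomorphism
as soon as it respects the brackets of basis vectors, which is a finite check.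
-/

theorem LinearMap.map_lie_of_basis {ι R L L' : Type*} [CommRing R] [LieRing L]
    [LieAlgebra R L] [LieRing L'] [LieAlgebra R L'] (b : Module.Basis ι R L) (f : L →ₗ[R] L')
    (h : ∀ i j, f ⁅b i, b j⁆ = ⁅f (b i), f (b j)⁆) (x y : L) : f ⁅x, y⁆ = ⁅f x, f y⁆ := by
  have hB : (LieAlgebra.ad R L : L →ₗ[R] Module.End R L).compr₂ f =
      (LieAlgebra.ad R L' : L' →ₗ[R] Module.End R L').compl₁₂ f f :=
    LinearMap.ext_basis b b fun i j => by simpa using h i j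
  simpa using LinearMap.congr_fun₂ hB x y

namespace L626A1

section CommRing

variable {K : Type*} [CommRing K]

def coords : L626A1 K ≃ₗ[K] (Fin 7 → K) where
  toFun p := ![p.1 0, p.1 1, p.1 2, p.2.1 0, p.2.1 1, p.2.1 2, p.2.2]
  invFun f := (![f 0, f 1, f 2], ![f 3, f 4, f 5], f 6)
  map_add' p q := by ext i; fin_cases i <;> rfl
  map_smul' t p := by ext i; fin_cases i <;> rfl
  left_inv p := by ext i <;> (try fin_cases i) <;> rfl
  right_inv f := by ext i; fin_cases i <;> rfl

def shear (α : Fin 3 → K) : L626A1 K ≃ₗ[K] L626A1 K where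
  toFun p := (p.1, p.2.1, p.2.2 - α ⬝ᵥ p.2.1)
  invFun p := (p.1, p.2.1, p.2.2 + α ⬝ᵥ p.2.1)
  map_add' p q := by
    simp only [Prod.fst_add, Prod.snd_add, dotProduct_add, Prod.mk_add_mk]; ring_nf
  map_smul' t p := by simp [dotProduct_smul, mul_sub]
  left_inv p := by simp
  right_inv p := by simp

end CommRing

variable {K : Type*} [Field K]

lemma lie_def (p q : L626A1 K) : ⁅p, q⁆ = (0, B p.1 q.1, 0) := rfl

lemma B_eq (a c : Fin 3 → K) :
    B a c = ![a 0 * c 1 - a 1 * c 0, a 0 * c 2 - a 2 * c 0, a 1 * c 2 - a 2 * c 1] := by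
  funext i; fin_cases i <;> rfl

end L626A1

section

variable {K L : Type*} [CommRing K] [LieRing L] [LieAlgebra K L] (b : Module.Basis (Fin 7) K L)

/-- The change of variables: `x₄ + α₁x₇ ↦ e₄`, `x₅ + α₂x₇ ↦ e₅`, `x₆ + α₆x₇ ↦ e₆` and
`xᵢ ↦ eᵢ` otherwise, where `x` is the basis `b` and `e` the standard basis of `L626A1 K`. -/
noncomputable def toL626A1 (α : Fin 3 → K) : L ≃ₗ[K] L626A1 K :=
  b.equivFun ≪≫ₗ L626A1.coords.symm ≪≫ₗ L626A1.shear α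

theorem toL626A1_apply_basis (α : Fin 3 → K) (i : Fin 7) :
    toL626A1 b α (b i) = ![(![1, 0, 0], 0, 0), (![0, 1, 0], 0, 0), (![0, 0, 1], 0, 0),
      (0, ![1, 0, 0], -α 0), (0, ![0, 1, 0], -α 1), (0, ![0, 0, 1], -α 2), (0, 0, 1)] i := by
  fin_cases i <;> simp [toL626A1, L626A1.coords, L626A1.shear, dotProduct, Fin.sum_univ_three]

end

theorem toL626A1_lie_basis {K L : Type*} [Field K] [LieRing L] [LieAlgebra K L]
    (b : Module.Basis (Fin 7) K L) (α₁ α₂ α₆ : K)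
    (h12 : ⁅b 0, b 1⁆ = b 3 + α₁ • b 6)
    (h13 : ⁅b 0, b 2⁆ = b 4 + α₂ • b 6)
    (h23 : ⁅b 1, b 2⁆ = b 5 + α₆ • b 6)
    (hzero : ∀ i j : Fin 7,
      (i, j) ∉ ({(0,1),(1,0),(0,2),(2,0),(1,2),(2,1)} : Set (Fin 7 × Fin 7)) →
      ⁅b i, b j⁆ = 0) (i j : Fin 7) :
    toL626A1 b ![α₁, α₂, α₆] ⁅b i, b j⁆ =
      ⁅toL626A1 b ![α₁, α₂, α₆] (b i), toL626A1 b ![α₁, α₂, α₆] (b j)⁆ := by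
  fin_cases i <;> fin_cases j <;>
    simp only [Fin.zero_eta, Fin.mk_one, Fin.reduceFinMk, Fin.isValue] <;>
    (first
      | rw [h12] | rw [h13] | rw [h23] | rw [← lie_skew, h12] | rw [← lie_skew, h13]
      | rw [← lie_skew, h23] | rw [hzero _ _ (by decide)]) <;>
    simp [toL626A1_apply_basis, L626A1.lie_def, L626A1.B_eq, Prod.ext_iff, funext_iff,
      Fin.forall_fin_succ]

theorem stmt_5_general (K : Type*) [Field K] (L : Type*) [LieRing L] [LieAlgebra K L]
    (b : Module.Basis (Fin 7) K L) (α₁ α₂ α₆ : K)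
    (h12 : ⁅b 0, b 1⁆ = b 3 + α₁ • b 6)
    (h13 : ⁅b 0, b 2⁆ = b 4 + α₂ • b 6)
    (h23 : ⁅b 1, b 2⁆ = b 5 + α₆ • b 6)
    (hzero : ∀ i j : Fin 7,
      (i, j) ∉ ({(0,1),(1,0),(0,2),(2,0),(1,2),(2,1)} : Set (Fin 7 × Fin 7)) →
      ⁅b i, b j⁆ = 0) :
    Nonempty (L ≃ₗ⁅K⁆ L626A1 K) :=
  let φ := toL626A1 b ![α₁, α₂, α₆]
  ⟨{ φ with
    map_lie' := φ.toLinearMap.map_lie_of_basis b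
      (toL626A1_lie_basis b α₁ α₂ α₆ h12 h13 h23 hzero) _ _ }⟩

/-- a 7-dimensional nilpotent Lie algebra of class two with a central element
`x₇` and brackets `[x₁,x₂]=x₄+α₁x₇`, `[x₁,x₃]=x₅+α₂x₇`, `[x₂,x₃]=x₆+α₆x₇`, all remaining
brackets of basis vectors being zero, is isomorphic to `L_{6,26} ⊕ A(1)`. -/
theorem stmt_5 (K : Type*) [Field K] (L : Type*) [LieRing L] [LieAlgebra K L]
    (b : Module.Basis (Fin 7) K L) (α₁ α₂ α₆ : K)
    (hclass2 : LieModule.lowerCentralSeries K L L 2 = ⊥)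
    (hcent : b 6 ∈ LieAlgebra.center K L)
    (h12 : ⁅b 0, b 1⁆ = b 3 + α₁ • b 6)
    (h13 : ⁅b 0, b 2⁆ = b 4 + α₂ • b 6)
    (h23 : ⁅b 1, b 2⁆ = b 5 + α₆ • b 6)
    (hzero : ∀ i j : Fin 7,
      (i, j) ∉ ({(0,1),(1,0),(0,2),(2,0),(1,2),(2,1)} : Set (Fin 7 × Fin 7)) →
      ⁅b i, b j⁆ = 0) :
    Nonempty (L ≃ₗ⁅K⁆ L626A1 K) :=
  stmt_5_general K L b α₁ α₂ α₆ h12 h13 h23 hzero
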